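/- arXiv:1611.06173 — 3 statements merged into one kernel-verified Lean document; each statement's English description precedes it below -/
import Mathlib

section
/- Let p ∈ [1,∞), K ≥ 1, δ ∈ (0,1), and set ε = (δ/2)^{(1+p)/p}. Then for any u ∈ [-K,K]^ℕ and n ≥ 1, the maximum cardinality of a subset of the d_{n,p}-ball of radius ε centered at u that is δ-separated with respect to d_{n,∞} is at most (3K/δ)^{δn/2} · 2^{H(δ/2) n}, where H(x) = -x log x - (1-x) log(1-x). -/
/-!
Round each coordinate of `v - u` to the nearest multiple of `δ`. Two points of `S` with the same
rounding are `δ`-close in every coordinate, so separation makes the rounding injective on `S`.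
A coordinate rounded to `j` satisfies `|j| δ / 2 ≤ |v k - u k|`, and `|j| ≤ |j| ^ p`, so the ball
condition caps the ℓ¹-norm of the rounded vector at `δ n / 2`. Counting integer vectors under this
cap with the generating function `∑ j, T ^ |j| = (1 + T) / (1 - T)` gives
`#S * T ^ (δ n / 2) ≤ ((1 + T) / (1 - T)) ^ n`, and `T = (δ / 3) * α / (1 - α)` with `α = δ / 2`
turns this into the entropy bound.
-/

open Finset

/-- The normalized ℓ_p pseudo-distance on initial segments of length `n`. -/
noncomputable def dnp (p : ℝ) (n : ℕ) (u v : ℕ → ℝ) : ℝ :=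
  ((1 / (n : ℝ)) * ∑ k ∈ Finset.range n, |u k - v k| ^ p) ^ (1 / p)

/-- The ℓ_∞ pseudo-distance on initial segments of length `n`. -/
noncomputable def dninf (n : ℕ) (u v : ℕ → ℝ) : ℝ :=
  ⨆ k : Fin n, |u (k : ℕ) - v (k : ℕ)|

/-- Binary entropy function (base-2 logarithms). -/
noncomputable def binEnt (x : ℝ) : ℝ :=
  -(x * Real.logb 2 x) - (1 - x) * Real.logb 2 (1 - x)

section Rounding

variable {R : Type*} [Field R] [LinearOrder R] [IsStrictOrderedRing R] [FloorRing R]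

theorem abs_round_le_two_mul_abs (x : R) : |(round x : R)| ≤ 2 * |x| := by
  rcases eq_or_ne (round x) 0 with h | h
  · simp [h]
  · have h1 : (1 : R) ≤ |(round x : R)| := by exact_mod_cast Int.one_le_abs h
    have h2 : |(round x : R)| ≤ |x| + 1 / 2 :=
      calc |(round x : R)| = |x - (x - round x)| := by rw [sub_sub_cancel]
        _ ≤ |x| + |x - round x| := abs_sub _ _
        _ ≤ |x| + 1 / 2 := by gcongr; exact abs_sub_round x
    linarith

theorem abs_sub_lt_of_round_div_eq {δ x y : R} (hδ : 0 < δ)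
    (h : round (x / δ) = round (y / δ)) : |x - y| < δ := by
  rw [round_eq, round_eq] at h
  have := Int.abs_sub_lt_one_of_floor_eq_floor h
  rwa [add_sub_add_right_eq_sub, ← sub_div, abs_div, abs_of_pos hδ, div_lt_one hδ] at this

end Rounding

theorem abs_intCast_le_rpow {p : ℝ} (hp : 1 ≤ p) (j : ℤ) : |(j : ℝ)| ≤ |(j : ℝ)| ^ p := by
  rcases eq_or_ne j 0 with rfl | h
  · simp [Real.zero_rpow (by linarith : p ≠ 0)]
  · exact Real.self_le_rpow_of_one_le (by exact_mod_cast Int.one_le_abs h) hp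

theorem abs_round_div_mul_rpow_le {p δ : ℝ} (hp : 1 ≤ p) (hδ : 0 < δ) (x : ℝ) :
    |(round (x / δ) : ℝ)| * (δ / 2) ^ p ≤ |x| ^ p := by
  set c := |(round (x / δ) : ℝ)|
  have hc : c * (δ / 2) ≤ |x| := by
    have := abs_round_le_two_mul_abs (x / δ)
    rw [abs_div, abs_of_pos hδ, mul_div_assoc', le_div_iff₀ hδ] at this
    linarith
  calc c * (δ / 2) ^ p ≤ c ^ p * (δ / 2) ^ p := by gcongr; exact abs_intCast_le_rpow hp _
    _ = (c * (δ / 2)) ^ p := (Real.mul_rpow (abs_nonneg _) (by positivity)).symm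
    _ ≤ |x| ^ p := by gcongr

theorem sum_rpow_le_of_dnp_le {p r : ℝ} {n : ℕ} {u v : ℕ → ℝ} (hp : 0 < p)
    (h : dnp p n u v ≤ r) : ∑ k ∈ range n, |u k - v k| ^ p ≤ n * r ^ p := by
  rcases n.eq_zero_or_pos with rfl | hn
  · simp
  have hx0 : 0 ≤ 1 / (n : ℝ) * ∑ k ∈ range n, |u k - v k| ^ p := by positivity
  unfold dnp at h
  have := Real.rpow_le_rpow (Real.rpow_nonneg hx0 _) h hp.le
  rwa [← Real.rpow_mul hx0, one_div_mul_cancel hp.ne', Real.rpow_one, one_div,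
    inv_mul_le_iff₀ (by exact_mod_cast hn)] at this

theorem sum_abs_round_le_of_dnp_le {p δ : ℝ} {n : ℕ} {u v : ℕ → ℝ} (hp : 1 ≤ p) (hδ : 0 < δ)
    (h : dnp p n u v ≤ (δ / 2) ^ ((1 + p) / p)) :
    ∑ k ∈ range n, |(round ((v k - u k) / δ) : ℝ)| ≤ δ / 2 * n := by
  have hp0 : 0 < p := by linarith
  have hsum := sum_rpow_le_of_dnp_le hp0 h
  rw [← Real.rpow_mul (by positivity), div_mul_cancel₀ _ hp0.ne',
    Real.rpow_add (by positivity), Real.rpow_one] at hsum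
  refine le_of_mul_le_mul_right ?_ (Real.rpow_pos_of_pos (by positivity : 0 < δ / 2) p)
  calc (∑ k ∈ range n, |(round ((v k - u k) / δ) : ℝ)|) * (δ / 2) ^ p
      ≤ ∑ k ∈ range n, |u k - v k| ^ p := by
        rw [sum_mul]
        refine sum_le_sum fun k _ => ?_
        rw [abs_sub_comm]
        exact abs_round_div_mul_rpow_le hp hδ _
    _ ≤ δ / 2 * n * (δ / 2) ^ p := by linarith

theorem dninf_lt_of_forall_lt {δ : ℝ} {n : ℕ} {v w : ℕ → ℝ} (hδ : 0 < δ)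
    (h : ∀ k < n, |v k - w k| < δ) : dninf n v w < δ := by
  rcases isEmpty_or_nonempty (Fin n) with _ | _
  · simpa [dninf] using hδ
  obtain ⟨k₀, hk₀⟩ := Finite.exists_max fun k : Fin n => |v k - w k|
  exact (ciSup_le hk₀).trans_lt (h k₀ k₀.2)

theorem sum_prod_le_pow_of_hasSum {ι β : Type*} [Fintype ι] {w : β → ℝ} (hw : ∀ b, 0 ≤ w b)
    {s : ℝ} (hs : HasSum w s) (G : Finset (ι → β)) :
    ∑ g ∈ G, ∏ i, w (g i) ≤ s ^ Fintype.card ι := by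
  classical
  set J := G.biUnion fun g => univ.image g
  have hGJ : G ⊆ Fintype.piFinset fun _ => J := fun g hg =>
    Fintype.mem_piFinset.2 fun i => mem_biUnion.2 ⟨g, hg, mem_image_of_mem g (mem_univ i)⟩
  calc ∑ g ∈ G, ∏ i, w (g i) ≤ ∑ g ∈ Fintype.piFinset fun _ => J, ∏ i, w (g i) :=
        sum_le_sum_of_subset_of_nonneg hGJ fun g _ _ => prod_nonneg fun i _ => hw _
    _ = (∑ j ∈ J, w j) ^ Fintype.card ι := by
        rw [sum_prod_piFinset, prod_const, card_univ]
    _ ≤ s ^ Fintype.card ι :=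
        pow_le_pow_left₀ (sum_nonneg fun j _ => hw j) (sum_le_hasSum J (fun j _ => hw j) hs) _

theorem hasSum_pow_natAbs {T : ℝ} (h0 : 0 ≤ T) (h1 : T < 1) :
    HasSum (fun j : ℤ => T ^ j.natAbs) ((1 + T) / (1 - T)) := by
  have hgeom := hasSum_geometric_of_lt_one h0 h1
  have hneg : HasSum (fun n : ℕ => T ^ (-((n : ℤ) + 1)).natAbs) (T * (1 - T)⁻¹) := by
    have hfun : (fun n : ℕ => T ^ (-((n : ℤ) + 1)).natAbs) = fun n => T * T ^ n := by
      ext n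
      rw [← pow_succ']
      congr 1
    rw [hfun]
    exact hgeom.mul_left T
  have hsum := HasSum.of_nat_of_neg_add_one (f := fun j : ℤ => T ^ j.natAbs) hgeom hneg
  convert hsum using 1
  field_simp [(by linarith : 1 - T ≠ 0)]

theorem card_mul_rpow_le_of_sum_abs_le {ι : Type*} [Fintype ι] {T m : ℝ} (hT0 : 0 < T)
    (hT1 : T < 1) (G : Finset (ι → ℤ)) (hG : ∀ g ∈ G, ∑ i, |(g i : ℝ)| ≤ m) :
    #G * T ^ m ≤ ((1 + T) / (1 - T)) ^ Fintype.card ι := by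
  have hweight : ∀ g ∈ G, T ^ m ≤ ∏ i, T ^ (g i).natAbs := fun g hg => by
    rw [prod_pow_eq_pow_sum, ← Real.rpow_natCast]
    refine Real.rpow_le_rpow_of_exponent_ge hT0 hT1.le ?_
    push_cast [Nat.cast_natAbs, Int.cast_abs]
    exact hG g hg
  calc #G * T ^ m = ∑ _g ∈ G, T ^ m := by rw [sum_const, nsmul_eq_mul]
    _ ≤ ∑ g ∈ G, ∏ i, T ^ (g i).natAbs := sum_le_sum hweight
    _ ≤ _ := sum_prod_le_pow_of_hasSum (fun j => by positivity) (hasSum_pow_natAbs hT0.le hT1) G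

theorem card_mul_rpow_le_of_separated_of_dnp_le {p δ T : ℝ} {n : ℕ} {u : ℕ → ℝ}
    {S : Finset (ℕ → ℝ)} (hp : 1 ≤ p) (hδ : 0 < δ) (hT0 : 0 < T) (hT1 : T < 1)
    (hSball : ∀ v ∈ S, dnp p n u v ≤ (δ / 2) ^ ((1 + p) / p))
    (hSsep : ∀ v ∈ S, ∀ w ∈ S, v ≠ w → δ ≤ dninf n v w) :
    #S * T ^ (δ / 2 * n) ≤ ((1 + T) / (1 - T)) ^ n := by
  let ψ : (ℕ → ℝ) → Fin n → ℤ := fun v k => round ((v k - u k) / δ)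
  have hinj : Set.InjOn ψ S := by
    intro v hv w hw hvw
    by_contra hne
    refine (hSsep v hv w hw hne).not_gt (dninf_lt_of_forall_lt hδ fun k hk => ?_)
    simpa using abs_sub_lt_of_round_div_eq hδ (congrFun hvw ⟨k, hk⟩)
  have hbudget : ∀ g ∈ S.image ψ, ∑ k, |(g k : ℝ)| ≤ δ / 2 * n := by
    simp only [mem_image, forall_exists_index, and_imp]
    rintro _ v hv rfl
    rw [Fin.sum_univ_eq_sum_range (fun k => |(round ((v k - u k) / δ) : ℝ)|)]
    exact sum_abs_round_le_of_dnp_le hp hδ (hSball v hv)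
  have hcount := card_mul_rpow_le_of_sum_abs_le hT0 hT1 _ hbudget
  rwa [card_image_of_injOn hinj, Fintype.card_fin] at hcount

theorem two_rpow_binEnt_mul {α : ℝ} (h0 : 0 < α) (h1 : α < 1) (x : ℝ) :
    (2 : ℝ) ^ (binEnt α * x) = (1 - α)⁻¹ ^ x / (α / (1 - α)) ^ (α * x) := by
  have h1' : 0 < 1 - α := by linarith
  rw [Real.rpow_def_of_pos two_pos, Real.rpow_def_of_pos (inv_pos.2 h1'),
    Real.rpow_def_of_pos (div_pos h0 h1'), ← Real.exp_sub, binEnt, Real.logb, Real.logb,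
    Real.log_inv, Real.log_div h0.ne' h1'.ne']
  congr 1
  field_simp
  ring

theorem one_add_div_one_sub_le {y c : ℝ} (hy0 : 0 ≤ y) (hy1 : y ≤ 1) (hc : c ≤ 1 / 3) :
    (1 + y * c) / (1 - y * c) ≤ 1 + y := by
  have hyc : y * c ≤ 1 / 3 := by nlinarith
  rw [div_le_iff₀ (by linarith)]
  nlinarith [mul_le_mul_of_nonneg_left hc hy0, mul_le_mul_of_nonneg_left hy1 hy0]

theorem separated_in_ball_card_bound_general
    (p : ℝ) (hp : 1 ≤ p) (K : ℝ) (hK : 1 ≤ K) (δ : ℝ) (hδ : 0 < δ) (hδ1 : δ < 1)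
    (ε : ℝ) (hε : ε = (δ / 2) ^ ((1 + p) / p))
    (u : ℕ → ℝ) (n : ℕ)
    (S : Finset (ℕ → ℝ))
    (hSball : ∀ v ∈ S, dnp p n u v ≤ ε)
    (hSsep : ∀ v ∈ S, ∀ w ∈ S, v ≠ w → δ ≤ dninf n v w) :
    (S.card : ℝ) ≤ (3 * K / δ) ^ (δ * n / 2) * 2 ^ (binEnt (δ / 2) * n) := by
  subst hε
  set α := δ / 2 with hα
  set y := α / (1 - α) with hy
  set T := y * (δ / 3) with hT
  have hα1 : 0 < 1 - α := by linarith
  have hy1 : y ≤ 1 := by rw [div_le_one hα1]; linarith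
  have hT0 : 0 < T := by positivity
  have hT1 : T < 1 := by nlinarith [mul_le_mul_of_nonneg_right hy1 hδ.le]
  have hW : (1 + T) / (1 - T) ≤ (1 - α)⁻¹ :=
    (one_add_div_one_sub_le (by positivity) hy1 (by linarith)).trans_eq
      (by rw [hy]; field_simp; ring)
  have hcount := card_mul_rpow_le_of_separated_of_dnp_le hp hδ hT0 hT1 hSball hSsep
  rw [show δ * n / 2 = α * n by ring]
  calc (#S : ℝ) ≤ (1 - α)⁻¹ ^ n / T ^ (α * n) := by
        rw [le_div_iff₀ (by positivity)]
        exact hcount.trans (pow_le_pow_left₀ (by positivity) hW n)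
    _ = (3 / δ) ^ (α * n) * 2 ^ (binEnt α * n) := by
        rw [two_rpow_binEnt_mul (by positivity) (by linarith), Real.mul_rpow (by positivity)
          (by positivity), ← inv_div δ 3, Real.inv_rpow (by positivity), Real.rpow_natCast]
        ring
    _ ≤ (3 * K / δ) ^ (α * n) * 2 ^ (binEnt α * n) := by gcongr; linarith

theorem separated_in_ball_card_bound
    (p : ℝ) (hp : 1 ≤ p) (K : ℝ) (hK : 1 ≤ K) (δ : ℝ) (hδ : 0 < δ) (hδ1 : δ < 1)
    (ε : ℝ) (hε : ε = (δ / 2) ^ ((1 + p) / p))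
    (u : ℕ → ℝ) (hu : ∀ k, u k ∈ Set.Icc (-K) K) (n : ℕ) (hn : 1 ≤ n)
    (S : Finset (ℕ → ℝ))
    (hSball : ∀ v ∈ S, dnp p n u v ≤ ε)
    (hSsep : ∀ v ∈ S, ∀ w ∈ S, v ≠ w → δ ≤ dninf n v w) :
    (S.card : ℝ) ≤ (3 * K / δ) ^ (δ * n / 2) * 2 ^ (binEnt (δ / 2) * n) :=
  separated_in_ball_card_bound_general p hp K hK δ hδ hδ1 ε hε u n S hSball hSsep
end

section
/- Let U ⊆ [-K,K]^ℕ with K ≥ 1, let δ ∈ (0,1), p ∈ [1,∞), and ε = (δ/2)^{(1+p)/p}. Then the covering number of U at radius δ under d_{n,∞} satisfies N(U, δ, d_{n,∞}) ≤ N(U, ε, d_{n,p}) · (3K/δ)^{δn/2} · 2^{H(δ/2)n}. -/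
open Finset
open scoped ENNReal

/-- The covering number of `U` at radius `δ` with respect to the pseudo-metric `d`. -/
noncomputable def coveringNumber (δ : ℝ) (d : (ℕ → ℝ) → (ℕ → ℝ) → ℝ)
    (U : Set (ℕ → ℝ)) : ℝ≥0∞ :=
  sInf {m : ℝ≥0∞ | ∃ C : Finset (ℕ → ℝ), (C.card : ℝ≥0∞) = m ∧
    ∀ u ∈ U, ∃ c ∈ C, d u c ≤ δ}

/-!
By Markov's inequality, `dnp p n u c ≤ (δ / 2) ^ ((1 + p) / p)` forces `u` and `c` to differ by
more than `δ / 2` on a set `S` of at most `δ n / 2` of the first `n` coordinates. Overwriting `c`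
on `S` by points of a `δ`-grid of `[-K, K]` (at most `3K / δ` points) therefore turns an
`ε`-net for `dnp p n` into a `δ`-net for `dninf n`, at the cost of a factor `(3K / δ) ^ (δ n / 2)`
per choice of `S`. With `q = δ / 2 ≤ 1 / 2`, every such `S` has weight
`q ^ #S * (1 - q) ^ (n - #S) ≥ 2 ^ (-H(q) n)` in the expansion of `(q + (1 - q)) ^ n = 1`,
so there are at most `2 ^ (H(q) n)` of them.
-/

lemma two_rpow_neg_binEnt_mul_le {q : ℝ} (hq : 0 < q) (hq2 : q ≤ 1 / 2) {N j : ℕ}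
    (hj : (j : ℝ) ≤ q * N) : (2 : ℝ) ^ (-(binEnt q * N)) ≤ q ^ j * (1 - q) ^ (N - j) := by
  have hq1 : 0 < 1 - q := by linarith
  have hjN : j ≤ N := by
    have : q * N ≤ N := by nlinarith [(N.cast_nonneg : (0 : ℝ) ≤ N)]
    exact_mod_cast hj.trans this
  have hpow : ∀ x : ℝ, 0 < x → ∀ m : ℕ, x ^ m = 2 ^ (Real.logb 2 x * m) := fun x hx m => by
    rw [Real.rpow_mul zero_le_two, Real.rpow_logb two_pos (by norm_num) hx, Real.rpow_natCast]
  have hlog : Real.logb 2 q ≤ Real.logb 2 (1 - q) :=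
    Real.logb_le_logb_of_le one_lt_two hq (by linarith)
  rw [hpow q hq, hpow (1 - q) hq1, ← Real.rpow_add two_pos]
  refine Real.rpow_le_rpow_of_exponent_le one_le_two ?_
  -- the exponent is affine in `j` with slope `logb 2 (q / (1 - q)) ≤ 0`
  unfold binEnt
  push_cast [hjN]
  nlinarith

lemma card_powerset_filter_le_two_rpow_binEnt {α : Type*} {q : ℝ} (hq : 0 < q) (hq2 : q ≤ 1 / 2)
    (s : Finset α) :
    (#{t ∈ s.powerset | (#t : ℝ) ≤ q * #s} : ℝ) ≤ 2 ^ (binEnt q * #s) := by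
  have hweight : (#{t ∈ s.powerset | (#t : ℝ) ≤ q * #s} : ℝ) * 2 ^ (-(binEnt q * #s)) ≤ 1 :=
    calc _ = ∑ t ∈ s.powerset with (#t : ℝ) ≤ q * #s, (2 : ℝ) ^ (-(binEnt q * #s)) := by
          rw [sum_const, nsmul_eq_mul]
      _ ≤ ∑ t ∈ s.powerset with (#t : ℝ) ≤ q * #s, q ^ #t * (1 - q) ^ (#s - #t) :=
          sum_le_sum fun t ht => two_rpow_neg_binEnt_mul_le hq hq2 (mem_filter.1 ht).2
      _ ≤ ∑ t ∈ s.powerset, q ^ #t * (1 - q) ^ (#s - #t) :=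
          sum_le_sum_of_subset_of_nonneg (filter_subset _ _) fun t _ _ => by
            have : 0 ≤ 1 - q := by linarith
            positivity
      _ = 1 := by rw [sum_pow_mul_eq_add_pow, add_sub_cancel, one_pow]
  rwa [Real.rpow_neg zero_le_two, ← div_eq_mul_inv, div_le_one (by positivity)] at hweight

lemma exists_finset_card_le_forall_abs_sub_le {K δ : ℝ} (hK : 0 ≤ K) (hδ : 0 < δ) :
    ∃ G : Finset ℝ, (#G : ℝ) ≤ K / δ + 1 ∧ ∀ x ∈ Set.Icc (-K) K, ∃ y ∈ G, |x - y| ≤ δ := by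
  refine ⟨(range (⌊K / δ⌋₊ + 1)).image fun j : ℕ => -K + δ * (2 * j + 1), ?_, ?_⟩
  · calc (#(image _ _) : ℝ) ≤ ⌊K / δ⌋₊ + 1 := by
          exact_mod_cast card_image_le.trans_eq (card_range _)
      _ ≤ K / δ + 1 := by gcongr; exact Nat.floor_le (div_nonneg hK hδ.le)
  · rintro x ⟨hxl, hxu⟩
    -- `x` lies within `δ` of the midpoint of the `j`-th interval of length `2δ` starting at `-K`
    set j := ⌊(x + K) / (2 * δ)⌋₊
    have hj : (j : ℝ) ≤ (x + K) / (2 * δ) := Nat.floor_le (div_nonneg (by linarith) (by positivity))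
    have hj' : (x + K) / (2 * δ) < j + 1 := Nat.lt_floor_add_one _
    rw [le_div_iff₀ (by positivity)] at hj
    rw [div_lt_iff₀ (by positivity)] at hj'
    refine ⟨_, mem_image_of_mem _ (mem_range.2 (Nat.lt_succ_of_le (Nat.le_floor (n := j) ?_))), ?_⟩
    · rw [le_div_iff₀ hδ]; nlinarith
    · rw [abs_le]; constructor <;> nlinarith

lemma coveringNumber_le_mul_ofReal {d d' : (ℕ → ℝ) → (ℕ → ℝ) → ℝ} {U : Set (ℕ → ℝ)}
    {ε δ F : ℝ} (hF : 0 < F)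
    (h : ∀ C : Finset (ℕ → ℝ), (∀ u ∈ U, ∃ c ∈ C, d u c ≤ ε) →
      ∃ C' : Finset (ℕ → ℝ), (∀ u ∈ U, ∃ c ∈ C', d' u c ≤ δ) ∧ (#C' : ℝ) ≤ #C * F) :
    coveringNumber δ d' U ≤ coveringNumber ε d U * ENNReal.ofReal F := by
  rw [coveringNumber, coveringNumber]
  conv_rhs => rw [sInf_eq_iInf',
    ENNReal.iInf_mul_of_ne (ENNReal.ofReal_pos.2 hF).ne' ENNReal.ofReal_ne_top]
  refine le_iInf fun ⟨_, C, hC⟩ => ?_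
  obtain ⟨rfl, hC⟩ := hC
  obtain ⟨C', hC', hcard⟩ := h C hC
  calc sInf {m | ∃ C : Finset (ℕ → ℝ), (#C : ℝ≥0∞) = m ∧ ∀ u ∈ U, ∃ c ∈ C, d' u c ≤ δ}
        ≤ #C' := sInf_le ⟨C', rfl, hC'⟩
    _ ≤ ENNReal.ofReal (#C * F) := by rw [← ENNReal.ofReal_natCast]; gcongr
    _ = #C * ENNReal.ofReal F := by
        rw [ENNReal.ofReal_mul (Nat.cast_nonneg _), ENNReal.ofReal_natCast]

lemma sum_abs_sub_rpow_le_of_dnp_le {p r : ℝ} (hp : 0 < p) (hr : 0 ≤ r) {n : ℕ} {u v : ℕ → ℝ}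
    (h : dnp p n u v ≤ r) : ∑ k ∈ range n, |u k - v k| ^ p ≤ n * r ^ p := by
  rcases n.eq_zero_or_pos with rfl | hn
  · simp
  rwa [dnp, one_div p, Real.rpow_inv_le_iff_of_pos (by positivity) hr hp, one_div,
    inv_mul_le_iff₀ (by positivity)] at h

lemma card_filter_lt_abs_sub_le_of_dnp_le {p t : ℝ} (hp : 0 < p) (ht : 0 < t) {n : ℕ}
    {u v : ℕ → ℝ} (h : dnp p n u v ≤ t ^ ((1 + p) / p)) :
    (#{k ∈ range n | t < |u k - v k|} : ℝ) ≤ t * n := by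
  have hsum := sum_abs_sub_rpow_le_of_dnp_le hp (by positivity) h
  rw [← Real.rpow_mul ht.le, div_mul_cancel₀ _ hp.ne', Real.rpow_add ht, Real.rpow_one] at hsum
  refine le_of_mul_le_mul_right ?_ (Real.rpow_pos_of_pos ht p)
  calc (#{k ∈ range n | t < |u k - v k|} : ℝ) * t ^ p
      = ∑ k ∈ range n with t < |u k - v k|, t ^ p := by rw [sum_const, nsmul_eq_mul]
    _ ≤ ∑ k ∈ range n with t < |u k - v k|, |u k - v k| ^ p :=
        sum_le_sum fun k hk => Real.rpow_le_rpow ht.le (mem_filter.1 hk).2.le hp.le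
    _ ≤ ∑ k ∈ range n, |u k - v k| ^ p :=
        sum_le_sum_of_subset_of_nonneg (filter_subset _ _) fun k _ _ => by positivity
    _ ≤ t * n * t ^ p := by linarith

lemma dninf_le {n : ℕ} {u v : ℕ → ℝ} {δ : ℝ} (hδ : 0 ≤ δ) (h : ∀ k < n, |u k - v k| ≤ δ) :
    dninf n u v ≤ δ :=
  Real.iSup_le (fun k => h k k.isLt) hδ

def patch (c : ℕ → ℝ) (S : Finset ℕ) (g : ∀ k ∈ S, ℝ) : ℕ → ℝ :=
  fun k => if h : k ∈ S then g k h else c k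

open Classical in
lemma card_image_patch_le (c : ℕ → ℝ) (S : Finset ℕ) (G : Finset ℝ) :
    #((S.pi fun _ => G).image (patch c S)) ≤ #G ^ #S :=
  card_image_le.trans_eq (by rw [card_pi, prod_const])

lemma exists_mem_pi_abs_sub_patch_le (c u : ℕ → ℝ) {S : Finset ℕ} {G : Finset ℝ} {δ : ℝ}
    (h : ∀ k ∈ S, ∃ y ∈ G, |u k - y| ≤ δ) :
    ∃ g ∈ S.pi fun _ => G, ∀ k ∈ S, |u k - patch c S g k| ≤ δ := by
  choose g hgG hgu using h
  exact ⟨g, mem_pi.2 hgG, fun k hk => by simpa [patch, hk] using hgu k hk⟩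

open Classical in
lemma exists_dninf_cover_card_le {p δ : ℝ} (hp : 0 < p) (hδ : 0 < δ) {n : ℕ}
    {U : Set (ℕ → ℝ)} {G : Finset ℝ} (hG : ∀ u ∈ U, ∀ k, ∃ y ∈ G, |u k - y| ≤ δ)
    {C : Finset (ℕ → ℝ)} (hC : ∀ u ∈ U, ∃ c ∈ C, dnp p n u c ≤ (δ / 2) ^ ((1 + p) / p)) :
    ∃ C' : Finset (ℕ → ℝ), (∀ u ∈ U, ∃ c ∈ C', dninf n u c ≤ δ) ∧
      #C' ≤ #C * ∑ S ∈ (range n).powerset with (#S : ℝ) ≤ δ / 2 * n, #G ^ #S := by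
  set 𝒮 := (range n).powerset.filter fun S => (#S : ℝ) ≤ δ / 2 * n
  refine ⟨C.biUnion fun c => 𝒮.biUnion fun S => (S.pi fun _ => G).image (patch c S), ?_, ?_⟩
  · intro u hu
    obtain ⟨c, hc, hcu⟩ := hC u hu
    set S := (range n).filter fun k => δ / 2 < |u k - c k|
    have hS : S ∈ 𝒮 := mem_filter.2 ⟨mem_powerset.2 (filter_subset _ _),
      card_filter_lt_abs_sub_le_of_dnp_le hp (half_pos hδ) hcu⟩
    obtain ⟨g, hg, hgu⟩ := exists_mem_pi_abs_sub_patch_le c u fun k _ => hG u hu k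
    refine ⟨patch c S g, mem_biUnion.2 ⟨c, hc, mem_biUnion.2 ⟨S, hS, mem_image_of_mem _ hg⟩⟩,
      dninf_le hδ.le fun k hk => ?_⟩
    by_cases hkS : k ∈ S
    · exact hgu k hkS
    · have : |u k - c k| ≤ δ / 2 := by simpa [S, hk] using hkS
      rw [patch, dif_neg hkS]
      linarith
  · calc _ ≤ ∑ c ∈ C, #(𝒮.biUnion fun S => (S.pi fun _ => G).image (patch c S)) := card_biUnion_le
      _ ≤ ∑ c ∈ C, ∑ S ∈ 𝒮, #G ^ #S :=
          sum_le_sum fun c _ =>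
            card_biUnion_le.trans (sum_le_sum fun S _ => card_image_patch_le c S G)
      _ = #C * ∑ S ∈ 𝒮, #G ^ #S := by rw [sum_const, smul_eq_mul]

theorem coveringNumber_dninf_le_general
    (K : ℝ) (hK : 1 ≤ K) (U : Set (ℕ → ℝ)) (hU : ∀ u ∈ U, ∀ k, u k ∈ Set.Icc (-K) K)
    (δ : ℝ) (hδ : 0 < δ) (hδ1 : δ < 1) (p : ℝ) (hp : 1 ≤ p)
    (ε : ℝ) (hε : ε = (δ / 2) ^ ((1 + p) / p)) (n : ℕ) :
    coveringNumber δ (dninf n) U ≤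
      coveringNumber ε (dnp p n) U *
        ENNReal.ofReal ((3 * K / δ) ^ (δ * n / 2) * 2 ^ (binEnt (δ / 2) * n)) := by
  obtain ⟨G, hGcard, hG⟩ := exists_finset_card_le_forall_abs_sub_le (by linarith : 0 ≤ K) hδ
  set 𝒮 := (range n).powerset.filter fun S => (#S : ℝ) ≤ δ / 2 * n
  have h𝒮 : (#𝒮 : ℝ) ≤ 2 ^ (binEnt (δ / 2) * n) := by
    simpa using card_powerset_filter_le_two_rpow_binEnt (by linarith) (by linarith) (range n)
  have hGpow : ∀ S ∈ 𝒮, (#G : ℝ) ^ #S ≤ (3 * K / δ) ^ (δ * n / 2) := fun S hS => by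
    have h1 : 1 ≤ 3 * K / δ := by rw [le_div_iff₀ hδ]; linarith
    calc (#G : ℝ) ^ #S ≤ (3 * K / δ) ^ (#S : ℝ) := by
          rw [Real.rpow_natCast]
          gcongr
          calc (#G : ℝ) ≤ K / δ + 1 := hGcard
            _ ≤ 3 * K / δ := by rw [div_add_one hδ.ne']; gcongr; linarith
      _ ≤ (3 * K / δ) ^ (δ * n / 2) :=
          Real.rpow_le_rpow_of_exponent_le h1 (by linarith [(mem_filter.1 hS).2])
  refine coveringNumber_le_mul_ofReal (by positivity) fun C hC => ?_
  obtain ⟨C', hC', hcard⟩ := exists_dninf_cover_card_le (by linarith) hδ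
    (fun u hu k => hG _ (hU u hu k)) (hε ▸ hC)
  refine ⟨C', hC', ?_⟩
  calc (#C' : ℝ) ≤ #C * ∑ S ∈ 𝒮, (#G : ℝ) ^ #S := by exact_mod_cast hcard
    _ ≤ #C * (#𝒮 * (3 * K / δ) ^ (δ * n / 2)) := by
        gcongr
        exact (sum_le_sum hGpow).trans_eq (by rw [sum_const, nsmul_eq_mul])
    _ ≤ #C * ((3 * K / δ) ^ (δ * n / 2) * 2 ^ (binEnt (δ / 2) * n)) := by
        rw [mul_comm (#𝒮 : ℝ)]; gcongr

theorem coveringNumber_dninf_le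
    (K : ℝ) (hK : 1 ≤ K) (U : Set (ℕ → ℝ)) (hU : ∀ u ∈ U, ∀ k, u k ∈ Set.Icc (-K) K)
    (δ : ℝ) (hδ : 0 < δ) (hδ1 : δ < 1) (p : ℝ) (hp : 1 ≤ p)
    (ε : ℝ) (hε : ε = (δ / 2) ^ ((1 + p) / p)) (n : ℕ) (hn : 1 ≤ n) :
    coveringNumber δ (dninf n) U ≤
      coveringNumber ε (dnp p n) U *
        ENNReal.ofReal ((3 * K / δ) ^ (δ * n / 2) * 2 ^ (binEnt (δ / 2) * n)) :=
  coveringNumber_dninf_le_general K hK U hU δ hδ hδ1 p hp ε hε n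
end

section
/- Let U, V, W be finite-valued stationary processes with h(U) = 0, V ergodic, W i.i.d., and suppose (U,V,W) is jointly stationary with V independent of W. Then the pair process (U,V) is independent of W. -/
open MeasureTheory ProbabilityTheory

/-- Shannon entropy of the `n`-block distribution of a finite-valued process. -/
noncomputable def blockEntropy {Ω A : Type*} [MeasurableSpace Ω] [Fintype A]
    (μ : Measure Ω) (U : ℕ → Ω → A) (n : ℕ) : ℝ :=
  ∑ a : Fin n → A, Real.negMulLog (μ {ω | ∀ k : Fin n, U (k : ℕ) ω = a k}).toReal

/-- Kolmogorov–Sinai (per-coordinate) entropy of a finite-valued stationary process: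
by subadditivity, the limit of `H_n / n` equals the infimum. -/
noncomputable def procEntropy {Ω A : Type*} [MeasurableSpace Ω] [Fintype A]
    (μ : Measure Ω) (U : ℕ → Ω → A) : ℝ :=
  ⨅ n : {n : ℕ // 0 < n}, blockEntropy μ U n.1 / n.1

/-!
Write `P = (U, V)`, `H` for Shannon entropy, `Xⁿ` for the block `(X₀, …, X_{n-1})`, and
`c n = H(Wⁿ | Pⁿ)`. Joint stationarity and conditional subadditivity of entropy make `c`
subadditive, while `n ↦ H(Wⁿ)` is additive because `W` is i.i.d. Since `V` is independent of `W`,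
`c n ≥ H(Wⁿ | Vⁿ) - H(Uⁿ) = H(Wⁿ) - H(Uⁿ)`. Comparing at block length `m n` gives
`m H(Wⁿ) - n H(Uᵐ) ≤ c (m n) ≤ m c n`, and `H(Uᵐ) / m` is arbitrarily small because `h(U) = 0`.
Hence `c n = H(Wⁿ)`: each block of `P` is independent of the same block of `W`, and these blocks
generate the σ-algebras of the two processes.
-/

open Real

theorem Subadditive.additive_le_of_sub_le {c e u : ℕ → ℝ} (hc : Subadditive c) (hc0 : c 0 ≤ 0)
    (he : ∀ m n, e (m + n) = e m + e n) (hu : Subadditive u) (hu0 : u 0 ≤ 0)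
    (hu_rate : ∀ ε > 0, ∃ m ≠ 0, u m / m < ε) (hlow : ∀ n, e n - u n ≤ c n) (n : ℕ) :
    e n ≤ c n := by
  have he_mul (k : ℕ) : e (k * n) = k * e n := by
    induction k with
    | zero => simpa using he 0 0
    | succ k ih => rw [Nat.succ_mul, he, ih]; push_cast; ring
  refine le_of_forall_pos_le_add fun ε hε => ?_
  obtain ⟨m, hm, hum⟩ := hu_rate (ε / (n + 1)) (by positivity)
  have hm0 : (0 : ℝ) < m := Nat.cast_pos.2 (Nat.pos_of_ne_zero hm)
  have hc_mul : c (m * n) ≤ m * c n := by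
    have := hc.apply_mul_add_le m n 0
    rw [add_zero] at this
    linarith
  have hu_mul : u (m * n) ≤ n * u m := by
    have := hu.apply_mul_add_le n m 0
    rw [add_zero, Nat.mul_comm] at this
    linarith
  have hnu : (n : ℝ) * u m ≤ m * ε := by
    rw [div_lt_iff₀ hm0] at hum
    calc (n : ℝ) * u m ≤ n * (ε / (n + 1) * m) := by gcongr
      _ ≤ m * ε := by
        rw [div_mul_eq_mul_div, mul_div_assoc', div_le_iff₀ (by positivity)]
        nlinarith
  have hlow_mn := hlow (m * n)
  rw [he_mul] at hlow_mn
  have : (m : ℝ) * e n ≤ m * (c n + ε) := by rw [mul_add]; linarith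
  exact le_of_mul_le_mul_left this hm0

namespace ProbabilityTheory

section Entropy

variable {Ω S T R : Type*} [MeasurableSpace Ω] [Fintype S] [Fintype T] [Fintype R]

noncomputable def entropy (μ : Measure Ω) (X : Ω → S) : ℝ :=
  ∑ s, negMulLog (μ.real (X ⁻¹' {s}))

noncomputable def condEntropy (μ : Measure Ω) (X : Ω → S) (Y : Ω → T) : ℝ :=
  ∑ t, μ.real (Y ⁻¹' {t}) * entropy μ[|Y ← t] X

variable {μ : Measure Ω} {X : Ω → S} {Y : Ω → T} {Z : Ω → R}

theorem entropy_comp_of_injective {S' : Type*} [Fintype S'] {g : S → S'} (hg : g.Injective)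
    (X : Ω → S) : entropy μ (fun ω => g (X ω)) = entropy μ X := by
  refine (Fintype.sum_of_injective g hg _ _ (fun u hu => ?_) (fun s => ?_)).symm
  · have : (fun ω => g (X ω)) ⁻¹' {u} = ∅ :=
      Set.eq_empty_of_forall_notMem fun ω h => hu ⟨X ω, h⟩
    simp [this]
  · congr 2; ext ω; simp [hg.eq_iff]

theorem entropy_pair_comm (X : Ω → S) (Y : Ω → T) :
    entropy μ (fun ω => (X ω, Y ω)) = entropy μ (fun ω => (Y ω, X ω)) :=
  (entropy_comp_of_injective Prod.swap_injective _).symm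

theorem entropy_nonneg [IsZeroOrProbabilityMeasure μ] (X : Ω → S) : 0 ≤ entropy μ X :=
  Finset.sum_nonneg fun _ _ => negMulLog_nonneg measureReal_nonneg measureReal_le_one

theorem condEntropy_nonneg (X : Ω → S) (Y : Ω → T) : 0 ≤ condEntropy μ X Y :=
  Finset.sum_nonneg fun _ _ => mul_nonneg measureReal_nonneg (entropy_nonneg X)

theorem entropy_of_subsingleton [IsProbabilityMeasure μ] [Subsingleton S] (X : Ω → S) :
    entropy μ X = 0 := by
  refine Finset.sum_eq_zero fun s _ => ?_
  rw [show X ⁻¹' {s} = Set.univ from Set.eq_univ_of_forall fun ω => Subsingleton.elim _ _]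
  simp

variable [MeasurableSpace T] [DiscreteMeasurableSpace T]

theorem sum_measureReal_preimage_singleton_univ [IsFiniteMeasure μ] (hY : Measurable Y) :
    ∑ t, μ.real (Y ⁻¹' {t}) = μ.real Set.univ := by
  rw [sum_measureReal_preimage_singleton _ fun t _ => hY (measurableSet_singleton t)]
  simp

theorem measureReal_eq_sum_mul_cond [IsFiniteMeasure μ] (hY : Measurable Y) (E : Set Ω) :
    μ.real E = ∑ t, μ.real (Y ⁻¹' {t}) * (μ[|Y ← t]).real E := by
  conv_lhs => rw [← sum_meas_smul_cond_fiber hY μ]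
  simp only [Measure.real, Measure.coe_finsetSum, Measure.coe_smul, Finset.sum_apply,
    Pi.smul_apply, smul_eq_mul]
  rw [ENNReal.toReal_sum fun t _ => ENNReal.mul_ne_top (measure_ne_top _ _) (measure_ne_top _ _)]
  simp only [ENNReal.toReal_mul]

theorem measureReal_preimage_singleton_inter_eq_mul [IsFiniteMeasure μ] (hY : Measurable Y)
    (E : Set Ω) (t : T) : μ.real (Y ⁻¹' {t} ∩ E) = μ.real (Y ⁻¹' {t}) * (μ[|Y ← t]).real E := by
  rw [Measure.real, ← cond_mul_eq_inter (hY (measurableSet_singleton t)), ENNReal.toReal_mul,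
    mul_comm]
  rfl

theorem condEntropy_le_entropy [IsProbabilityMeasure μ] (hY : Measurable Y) :
    condEntropy μ X Y ≤ entropy μ X := by
  have hw : ∑ t, μ.real (Y ⁻¹' {t}) = 1 := by
    rw [sum_measureReal_preimage_singleton_univ hY, probReal_univ]
  unfold condEntropy entropy
  simp only [Finset.mul_sum]
  rw [Finset.sum_comm]
  refine Finset.sum_le_sum fun s _ => ?_
  rw [measureReal_eq_sum_mul_cond hY]
  exact concaveOn_negMulLog.le_map_sum (fun t _ => measureReal_nonneg) hw
    (fun t _ => Set.mem_Ici.2 measureReal_nonneg)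

variable [MeasurableSpace S] [DiscreteMeasurableSpace S]

theorem entropy_eq_of_map_eq {X' : Ω → S} (hX : Measurable X) (hX' : Measurable X')
    (h : μ.map X = μ.map X') : entropy μ X = entropy μ X' := by
  simp only [entropy, ← map_measureReal_apply hX (measurableSet_singleton _), h,
    map_measureReal_apply hX' (measurableSet_singleton _)]

theorem entropy_pair_eq_add_condEntropy [IsFiniteMeasure μ] (hX : Measurable X)
    (hY : Measurable Y) :
    entropy μ (fun ω => (X ω, Y ω)) = entropy μ Y + condEntropy μ X Y := by
  have hfiber (s : S) (t : T) : (fun ω => (X ω, Y ω)) ⁻¹' {(s, t)} = Y ⁻¹' {t} ∩ X ⁻¹' {s} := by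
    ext ω; simp [and_comm]
  have hmass (t : T) : (∑ s, (μ[|Y ← t]).real (X ⁻¹' {s})) * negMulLog (μ.real (Y ⁻¹' {t})) =
      negMulLog (μ.real (Y ⁻¹' {t})) := by
    by_cases ht : μ (Y ⁻¹' {t}) = 0
    · simp [Measure.real, ht]
    · have := cond_isProbabilityMeasure (μ := μ) ht
      rw [sum_measureReal_preimage_singleton_univ hX, probReal_univ, one_mul]
  simp only [entropy, condEntropy, Fintype.sum_prod_type_right, hfiber,
    measureReal_preimage_singleton_inter_eq_mul hY, negMulLog_mul, Finset.sum_add_distrib,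
    ← Finset.sum_mul, ← Finset.mul_sum, hmass]

theorem indepFun_iff_measureReal_preimage_singleton_inter_eq_mul [IsFiniteMeasure μ]
    (hX : Measurable X) (hY : Measurable Y) :
    IndepFun X Y μ ↔ ∀ s t, μ.real (X ⁻¹' {s} ∩ Y ⁻¹' {t}) =
      μ.real (X ⁻¹' {s}) * μ.real (Y ⁻¹' {t}) := by
  rw [indepFun_iff_map_prod_eq_prod_map_map hX.aemeasurable hY.aemeasurable,
    Measure.ext_iff_singleton, Prod.forall]
  refine forall₂_congr fun s t => ?_
  rw [← Set.singleton_prod_singleton, Measure.prod_prod, Measure.map_apply (hX.prodMk hY)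
    (measurableSet_singleton s |>.prod (measurableSet_singleton t)), Set.mk_preimage_prod,
    Measure.map_apply hX (measurableSet_singleton s),
    Measure.map_apply hY (measurableSet_singleton t),
    Measure.real, Measure.real, Measure.real, ← ENNReal.toReal_mul,
    ENNReal.toReal_eq_toReal_iff' (measure_ne_top _ _)
      (ENNReal.mul_ne_top (measure_ne_top _ _) (measure_ne_top _ _))]

theorem condEntropy_eq_entropy_iff_indepFun [IsProbabilityMeasure μ] (hX : Measurable X)
    (hY : Measurable Y) : condEntropy μ X Y = entropy μ X ↔ IndepFun X Y μ := by
  have hw : ∑ t, μ.real (Y ⁻¹' {t}) = 1 := by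
    rw [sum_measureReal_preimage_singleton_univ hY, probReal_univ]
  have htotal (s : S) := measureReal_eq_sum_mul_cond (μ := μ) hY (X ⁻¹' {s})
  have hjensen (s : S) := concaveOn_negMulLog.le_map_sum (t := Finset.univ)
    (p := fun t => (μ[|Y ← t]).real (X ⁻¹' {s})) (fun t _ => measureReal_nonneg) hw
    (fun t _ => Set.mem_Ici.2 measureReal_nonneg)
  have hcase (s : S) := strictConcaveOn_negMulLog.map_sum_eq_iff' (t := Finset.univ)
    (p := fun t => (μ[|Y ← t]).real (X ⁻¹' {s})) (fun t _ => measureReal_nonneg) hw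
    (fun t _ => Set.mem_Ici.2 measureReal_nonneg)
  simp only [smul_eq_mul, ← htotal] at hjensen hcase
  unfold condEntropy entropy
  simp only [Finset.mul_sum]
  rw [Finset.sum_comm, Finset.sum_eq_sum_iff_of_le fun s _ => hjensen s,
    indepFun_iff_measureReal_preimage_singleton_inter_eq_mul hX hY]
  simp only [Finset.mem_univ, true_implies]
  refine forall_congr' fun s => ?_
  rw [eq_comm, hcase s]
  refine forall_congr' fun t => ?_
  rw [Set.inter_comm, measureReal_preimage_singleton_inter_eq_mul hY, mul_comm (μ.real (X ⁻¹' {s}))]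
  by_cases ht : μ.real (Y ⁻¹' {t}) = 0 <;> simp [ht]

theorem entropy_pair_le [IsZeroOrProbabilityMeasure μ] (hX : Measurable X) (hY : Measurable Y) :
    entropy μ (fun ω => (X ω, Y ω)) ≤ entropy μ X + entropy μ Y := by
  rcases eq_zero_or_isProbabilityMeasure μ with rfl | _
  · simp [entropy]
  · rw [entropy_pair_eq_add_condEntropy hX hY, add_comm (entropy μ X)]
    exact add_le_add_right (condEntropy_le_entropy hY) _

theorem entropy_pair_eq_add_iff_indepFun [IsProbabilityMeasure μ] (hX : Measurable X)
    (hY : Measurable Y) :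
    entropy μ (fun ω => (X ω, Y ω)) = entropy μ X + entropy μ Y ↔ IndepFun X Y μ := by
  rw [entropy_pair_eq_add_condEntropy hX hY, add_comm (entropy μ X), add_right_inj,
    condEntropy_eq_entropy_iff_indepFun hX hY]

theorem condEntropy_eq_entropy_sub [IsFiniteMeasure μ] (hX : Measurable X) (hY : Measurable Y) :
    condEntropy μ X Y = entropy μ (fun ω => (X ω, Y ω)) - entropy μ Y := by
  rw [entropy_pair_eq_add_condEntropy hX hY, add_sub_cancel_left]

theorem entropy_comp_le [IsFiniteMeasure μ] {S' : Type*} [Fintype S'] [MeasurableSpace S']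
    [DiscreteMeasurableSpace S'] (hX : Measurable X) (g : S → S') :
    entropy μ (fun ω => g (X ω)) ≤ entropy μ X := by
  have hgX : Measurable fun ω => g (X ω) := Measurable.of_discrete.comp hX
  calc entropy μ (fun ω => g (X ω))
      ≤ entropy μ (fun ω => g (X ω)) + condEntropy μ X (fun ω => g (X ω)) :=
        le_add_of_nonneg_right (condEntropy_nonneg _ _)
    _ = entropy μ (fun ω => (X ω, g (X ω))) := (entropy_pair_eq_add_condEntropy hX hgX).symm
    _ = entropy μ X :=
        entropy_comp_of_injective (g := fun s => (s, g s)) (fun _ _ h => congrArg Prod.fst h) X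

theorem condEntropy_comp_of_injective [IsFiniteMeasure μ] {S' T' : Type*} [Fintype S']
    [MeasurableSpace S'] [DiscreteMeasurableSpace S'] [Fintype T'] [MeasurableSpace T']
    [DiscreteMeasurableSpace T'] (hX : Measurable X) (hY : Measurable Y) {f : S → S'}
    {g : T → T'} (hf : f.Injective) (hg : g.Injective) :
    condEntropy μ (fun ω => f (X ω)) (fun ω => g (Y ω)) = condEntropy μ X Y := by
  have hfX : Measurable fun ω => f (X ω) := Measurable.of_discrete.comp hX
  have hgY : Measurable fun ω => g (Y ω) := Measurable.of_discrete.comp hY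
  rw [condEntropy_eq_entropy_sub hfX hgY, condEntropy_eq_entropy_sub hX hY,
    entropy_comp_of_injective hg]
  congr 1
  exact entropy_comp_of_injective (g := Prod.map f g) (hf.prodMap hg) fun ω => (X ω, Y ω)

theorem condEntropy_pair_left_le (hX : Measurable X) (hY : Measurable Y) (Z : Ω → R) :
    condEntropy μ (fun ω => (X ω, Y ω)) Z ≤ condEntropy μ X Z + condEntropy μ Y Z := by
  rw [condEntropy, condEntropy, condEntropy, ← Finset.sum_add_distrib]
  refine Finset.sum_le_sum fun t _ => ?_
  rw [← mul_add]
  exact mul_le_mul_of_nonneg_left (entropy_pair_le hX hY) measureReal_nonneg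

variable [MeasurableSpace R] [DiscreteMeasurableSpace R]

theorem condEntropy_pair_right_le [IsFiniteMeasure μ] (hX : Measurable X) (hY : Measurable Y)
    (hZ : Measurable Z) : condEntropy μ X (fun ω => (Y ω, Z ω)) ≤ condEntropy μ X Y := by
  have hreorder : entropy μ (fun ω => (X ω, (Y ω, Z ω))) = entropy μ (fun ω => ((X ω, Z ω), Y ω)) :=
    (entropy_comp_of_injective (g := fun p : (S × R) × T => (p.1.1, (p.2, p.1.2)))
      (by rintro ⟨⟨_, _⟩, _⟩ ⟨⟨_, _⟩, _⟩ h; simp_all) fun ω => ((X ω, Z ω), Y ω))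
  have h1 := entropy_pair_eq_add_condEntropy (μ := μ) (hX.prodMk hZ) hY
  have h2 := entropy_pair_eq_add_condEntropy (μ := μ) hZ hY
  have h3 := entropy_pair_eq_add_condEntropy (μ := μ) hX (hY.prodMk hZ)
  have h4 := condEntropy_pair_left_le (μ := μ) hX hZ Y
  rw [entropy_pair_comm Z Y] at h2
  linarith

theorem condEntropy_prod_le [IsFiniteMeasure μ] {S' T' : Type*} [Fintype S']
    [MeasurableSpace S'] [DiscreteMeasurableSpace S'] [Fintype T'] [MeasurableSpace T']
    [DiscreteMeasurableSpace T'] {X' : Ω → S'} {Y' : Ω → T'} (hX : Measurable X)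
    (hX' : Measurable X') (hY : Measurable Y) (hY' : Measurable Y') :
    condEntropy μ (fun ω => (X ω, X' ω)) (fun ω => (Y ω, Y' ω)) ≤
      condEntropy μ X Y + condEntropy μ X' Y' := by
  have hswap : condEntropy μ X' (fun ω => (Y ω, Y' ω)) = condEntropy μ X' (fun ω => (Y' ω, Y ω)) :=
    (condEntropy_comp_of_injective (f := id) (g := Prod.swap) hX' (hY.prodMk hY')
      Function.injective_id Prod.swap_injective).symm
  calc condEntropy μ (fun ω => (X ω, X' ω)) (fun ω => (Y ω, Y' ω))
      ≤ condEntropy μ X (fun ω => (Y ω, Y' ω)) + condEntropy μ X' (fun ω => (Y ω, Y' ω)) :=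
        condEntropy_pair_left_le hX hX' _
    _ ≤ condEntropy μ X Y + condEntropy μ X' Y' := by
        rw [hswap]
        exact add_le_add (condEntropy_pair_right_le hX hY hY')
          (condEntropy_pair_right_le hX' hY' hY)

theorem entropy_sub_entropy_le_condEntropy_pair [IsProbabilityMeasure μ] (hX : Measurable X)
    (hY : Measurable Y) (hZ : Measurable Z) (hXZ : IndepFun X Z μ) :
    entropy μ X - entropy μ Y ≤ condEntropy μ X (fun ω => (Y ω, Z ω)) := by
  have hdrop :=
    entropy_comp_le (μ := μ) (hX.prodMk (hY.prodMk hZ)) fun p : S × (T × R) => (p.1, p.2.2)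
  have hXZ_add := (entropy_pair_eq_add_iff_indepFun hX hZ).2 hXZ
  have hYZ := entropy_pair_le (μ := μ) hY hZ
  rw [condEntropy_eq_entropy_sub hX (hY.prodMk hZ)]
  linarith

end Entropy

section Blocks

variable {Ω γ : Type*}

def block (X : ℕ → Ω → γ) (s n : ℕ) (ω : Ω) : Fin n → γ := fun k => X (k + s) ω

theorem block_add (X : ℕ → Ω → γ) (s m n : ℕ) :
    block X s (m + n) = fun ω => Fin.appendEquiv m n (block X s m ω, block X (s + m) n ω) := by
  funext ω k
  refine Fin.addCases (fun i => ?_) (fun j => ?_) k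
  · simp [block]
  · simp only [block, Fin.appendEquiv_apply, Fin.append_right, Fin.val_natAdd]
    congr 1
    omega

variable [MeasurableSpace Ω] {μ : Measure Ω}

theorem blockEntropy_eq_entropy_block [Fintype γ] (X : ℕ → Ω → γ) (n : ℕ) :
    blockEntropy μ X n = entropy μ (block X 0 n) := by
  refine Finset.sum_congr rfl fun a _ => ?_
  congr 3
  ext ω
  simp [block, funext_iff]

theorem exists_entropy_block_div_lt [Fintype γ] {X : ℕ → Ω → γ} {ε : ℝ}
    (h : procEntropy μ X < ε) : ∃ m ≠ 0, entropy μ (block X 0 m) / m < ε := by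
  have : Nonempty {n : ℕ // 0 < n} := ⟨⟨1, one_pos⟩⟩
  obtain ⟨⟨m, hm⟩, hlt⟩ := exists_lt_of_ciInf_lt h
  exact ⟨m, hm.ne', by rwa [← blockEntropy_eq_entropy_block]⟩

variable [MeasurableSpace γ]

def IsStationary (μ : Measure Ω) (X : ℕ → Ω → γ) : Prop :=
  μ.map (fun ω k => X (k + 1) ω) = μ.map (fun ω k => X k ω)

variable {X : ℕ → Ω → γ}

theorem measurable_block (hX : ∀ k, Measurable (X k)) (s n : ℕ) : Measurable (block X s n) :=
  measurable_pi_lambda _ fun _ => hX _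

theorem IsStationary.comp {δ : Type*} [MeasurableSpace δ] (h : IsStationary μ X)
    (hX : ∀ k, Measurable (X k)) {f : γ → δ} (hf : Measurable f) :
    IsStationary μ (fun k ω => f (X k ω)) := by
  unfold IsStationary at h
  have hF : Measurable fun (x : ℕ → γ) k => f (x k) :=
    measurable_pi_lambda _ fun k => hf.comp (measurable_pi_apply k)
  have h1 : Measurable fun ω k => X (k + 1) ω := measurable_pi_lambda _ fun _ => hX _
  have h0 : Measurable fun ω k => X k ω := measurable_pi_lambda _ hX
  calc μ.map (fun ω k => f (X (k + 1) ω))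
      = (μ.map fun ω k => X (k + 1) ω).map fun x k => f (x k) := (Measure.map_map hF h1).symm
    _ = μ.map (fun ω k => f (X k ω)) := by rw [h, Measure.map_map hF h0]; rfl

theorem IsStationary.map_shift (h : IsStationary μ X) (hX : ∀ k, Measurable (X k)) (s : ℕ) :
    μ.map (fun ω k => X (k + s) ω) = μ.map (fun ω k => X k ω) := by
  induction s with
  | zero => rfl
  | succ s ih =>
    have hshift : Measurable fun (x : ℕ → γ) k => x (k + 1) :=
      measurable_pi_lambda _ fun k => measurable_pi_apply _
    have hs : Measurable fun ω k => X (k + s) ω := measurable_pi_lambda _ fun _ => hX _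
    calc μ.map (fun ω k => X (k + (s + 1)) ω)
        = (μ.map fun ω k => X (k + s) ω).map fun x k => x (k + 1) := by
          rw [Measure.map_map hshift hs]
          congr; funext ω k; congr 1; omega
      _ = μ.map (fun ω k => X k ω) := by
          rw [ih, Measure.map_map hshift (measurable_pi_lambda _ hX)]
          exact h

theorem IsStationary.map_block (h : IsStationary μ X) (hX : ∀ k, Measurable (X k)) (s n : ℕ) :
    μ.map (block X s n) = μ.map (block X 0 n) := by
  have hrestr : Measurable fun (x : ℕ → γ) (k : Fin n) => x k :=
    measurable_pi_lambda _ fun k => measurable_pi_apply _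
  have hs : Measurable fun ω k => X (k + s) ω := measurable_pi_lambda _ fun _ => hX _
  calc μ.map (block X s n) = (μ.map fun ω k => X (k + s) ω).map fun x (k : Fin n) => x k :=
        (Measure.map_map hrestr hs).symm
    _ = μ.map (block X 0 n) := by
        rw [h.map_shift hX, Measure.map_map hrestr (measurable_pi_lambda _ hX)]
        rfl

theorem iIndepFun.indepFun_block (h : iIndepFun X μ) (hX : ∀ k, Measurable (X k)) (m n : ℕ) :
    IndepFun (block X 0 m) (block X m n) μ := by
  have hIco := h.indepFun_finset _ _ (Finset.Ico_disjoint_Ico_consecutive 0 m (m + n)) hX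
  exact hIco.comp
    (φ := fun x (k : Fin m) => x ⟨k, Finset.mem_Ico.2 ⟨Nat.zero_le _, k.2⟩⟩)
    (ψ := fun x (k : Fin n) => x ⟨k + m, Finset.mem_Ico.2 ⟨Nat.le_add_left _ _, by omega⟩⟩)
    (measurable_pi_lambda _ fun _ => measurable_pi_apply _)
    (measurable_pi_lambda _ fun _ => measurable_pi_apply _)

variable [Fintype γ] [DiscreteMeasurableSpace γ]

theorem IsStationary.entropy_block (h : IsStationary μ X) (hX : ∀ k, Measurable (X k)) (s n : ℕ) :
    entropy μ (block X s n) = entropy μ (block X 0 n) :=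
  entropy_eq_of_map_eq (measurable_block hX s n) (measurable_block hX 0 n) (h.map_block hX s n)

theorem IsStationary.subadditive_entropy_block [IsProbabilityMeasure μ] (h : IsStationary μ X)
    (hX : ∀ k, Measurable (X k)) : Subadditive fun n => entropy μ (block X 0 n) := by
  intro m n
  dsimp only
  rw [block_add X 0 m n, Nat.zero_add, entropy_comp_of_injective (Fin.appendEquiv m n).injective,
    ← h.entropy_block hX m n]
  exact entropy_pair_le (measurable_block hX 0 m) (measurable_block hX m n)

theorem IsStationary.entropy_block_add_of_iIndepFun [IsProbabilityMeasure μ] (h : IsStationary μ X)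
    (hind : iIndepFun X μ) (hX : ∀ k, Measurable (X k)) (m n : ℕ) :
    entropy μ (block X 0 (m + n)) = entropy μ (block X 0 m) + entropy μ (block X 0 n) := by
  rw [block_add X 0 m n, Nat.zero_add, entropy_comp_of_injective (Fin.appendEquiv m n).injective,
    (entropy_pair_eq_add_iff_indepFun (measurable_block hX 0 m) (measurable_block hX m n)).2
      (hind.indepFun_block hX m n), h.entropy_block hX m n]

variable {α β : Type*} [Fintype α] [Fintype β]

theorem entropy_block_pair (X : ℕ → Ω → α) (Y : ℕ → Ω → β) (s n : ℕ) :
    entropy μ (fun ω => (block X s n ω, block Y s n ω)) =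
      entropy μ (block (fun k ω => (X k ω, Y k ω)) s n) :=
  entropy_comp_of_injective (g := fun v : Fin n → α × β => (fun k => (v k).1, fun k => (v k).2))
    (fun _ _ h => funext fun k => Prod.ext (congrFun (congrArg Prod.fst h) k)
      (congrFun (congrArg Prod.snd h) k)) (block (fun k ω => (X k ω, Y k ω)) s n)

variable [MeasurableSpace α] [DiscreteMeasurableSpace α] [MeasurableSpace β]
  [DiscreteMeasurableSpace β] {X : ℕ → Ω → α} {Y : ℕ → Ω → β}

theorem IsStationary.condEntropy_block [IsFiniteMeasure μ]
    (h : IsStationary μ fun k ω => (X k ω, Y k ω)) (hX : ∀ k, Measurable (X k))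
    (hY : ∀ k, Measurable (Y k)) (s n : ℕ) :
    condEntropy μ (block X s n) (block Y s n) = condEntropy μ (block X 0 n) (block Y 0 n) := by
  have hXY k : Measurable fun ω => (X k ω, Y k ω) := (hX k).prodMk (hY k)
  rw [condEntropy_eq_entropy_sub (measurable_block hX s n) (measurable_block hY s n),
    condEntropy_eq_entropy_sub (measurable_block hX 0 n) (measurable_block hY 0 n),
    entropy_block_pair, entropy_block_pair, h.entropy_block hXY,
    (h.comp hXY measurable_snd).entropy_block hY]

theorem IsStationary.subadditive_condEntropy_block [IsFiniteMeasure μ]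
    (h : IsStationary μ fun k ω => (X k ω, Y k ω)) (hX : ∀ k, Measurable (X k))
    (hY : ∀ k, Measurable (Y k)) :
    Subadditive fun n => condEntropy μ (block X 0 n) (block Y 0 n) := by
  intro m n
  dsimp only
  rw [block_add X 0 m n, block_add Y 0 m n, Nat.zero_add,
    condEntropy_comp_of_injective ((measurable_block hX 0 m).prodMk (measurable_block hX m n))
      ((measurable_block hY 0 m).prodMk (measurable_block hY m n))
      (Fin.appendEquiv m n).injective (Fin.appendEquiv m n).injective,
    ← h.condEntropy_block hX hY m n]
  exact condEntropy_prod_le (measurable_block hX 0 m) (measurable_block hX m n)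
    (measurable_block hY 0 m) (measurable_block hY m n)

theorem entropy_block_sub_le_condEntropy_block [IsProbabilityMeasure μ] {Z : ℕ → Ω → γ}
    (hX : ∀ k, Measurable (X k)) (hY : ∀ k, Measurable (Y k)) (hZ : ∀ k, Measurable (Z k))
    (hYZ : IndepFun (fun ω k => Y k ω) (fun ω k => Z k ω) μ) (n : ℕ) :
    entropy μ (block Z 0 n) - entropy μ (block X 0 n) ≤
      condEntropy μ (block Z 0 n) (block (fun k ω => (X k ω, Y k ω)) 0 n) := by
  have hrestrY : Measurable fun (y : ℕ → β) (k : Fin n) => y k :=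
    measurable_pi_lambda _ fun _ => measurable_pi_apply _
  have hrestrZ : Measurable fun (z : ℕ → γ) (k : Fin n) => z k :=
    measurable_pi_lambda _ fun _ => measurable_pi_apply _
  have hXY k : Measurable fun ω => (X k ω, Y k ω) := (hX k).prodMk (hY k)
  have hpair : condEntropy μ (block Z 0 n) (fun ω => (block X 0 n ω, block Y 0 n ω)) =
      condEntropy μ (block Z 0 n) (block (fun k ω => (X k ω, Y k ω)) 0 n) :=
    condEntropy_comp_of_injective (f := id)
      (g := fun v : Fin n → α × β => (fun k => (v k).1, fun k => (v k).2))
      (measurable_block hZ 0 n) (measurable_block hXY 0 n) Function.injective_id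
      (fun _ _ h => funext fun k => Prod.ext (congrFun (congrArg Prod.fst h) k)
        (congrFun (congrArg Prod.snd h) k))
  rw [← hpair]
  exact entropy_sub_entropy_le_condEntropy_pair (measurable_block hZ 0 n) (measurable_block hX 0 n)
    (measurable_block hY 0 n) (hYZ.comp hrestrY hrestrZ).symm

end Blocks

theorem indepFun_process_of_indepFun_block {Ω α β : Type*} [MeasurableSpace Ω] {μ : Measure Ω}
    [IsZeroOrProbabilityMeasure μ] [MeasurableSpace α] [MeasurableSpace β] {X : ℕ → Ω → α}
    {Y : ℕ → Ω → β} (hX : ∀ k, Measurable (X k)) (hY : ∀ k, Measurable (Y k))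
    (h : ∀ n, IndepFun (block X 0 n) (block Y 0 n) μ) :
    IndepFun (fun ω k => X k ω) (fun ω k => Y k ω) μ := by
  refine IndepFun.process_indepFun_process hX hY fun I J => ?_
  obtain ⟨n, hn⟩ := (I ∪ J).exists_nat_subset_range
  have hI (i : I) : (i : ℕ) < n := Finset.mem_range.1 (hn (Finset.mem_union_left _ i.2))
  have hJ (j : J) : (j : ℕ) < n := Finset.mem_range.1 (hn (Finset.mem_union_right _ j.2))
  exact (h n).comp (φ := fun v (i : I) => v ⟨i, hI i⟩) (ψ := fun v (j : J) => v ⟨j, hJ j⟩)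
    (measurable_pi_lambda _ fun _ => measurable_pi_apply _)
    (measurable_pi_lambda _ fun _ => measurable_pi_apply _)

end ProbabilityTheory

theorem pair_process_indep_of_noise_general
    {Ω A B C : Type*} [MeasurableSpace Ω]
    [Fintype A] [Fintype B] [Fintype C]
    [MeasurableSpace A] [DiscreteMeasurableSpace A]
    [MeasurableSpace B] [DiscreteMeasurableSpace B]
    [MeasurableSpace C] [DiscreteMeasurableSpace C]
    (μ : Measure Ω) [IsProbabilityMeasure μ]
    (U : ℕ → Ω → A) (V : ℕ → Ω → B) (W : ℕ → Ω → C)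
    (hUm : ∀ k, Measurable (U k)) (hVm : ∀ k, Measurable (V k))
    (hWm : ∀ k, Measurable (W k))
    -- joint stationarity of the triple process
    (hstat : Measure.map (fun ω (k : ℕ) => (U (k + 1) ω, V (k + 1) ω, W (k + 1) ω)) μ =
      Measure.map (fun ω (k : ℕ) => (U k ω, V k ω, W k ω)) μ)
    -- U has zero entropy
    (hU0 : procEntropy μ U = 0)
    -- W is i.i.d.
    (hWiid : iIndepFun W μ)
    -- V is independent of W
    (hVW : IndepFun (fun ω (k : ℕ) => V k ω) (fun ω (k : ℕ) => W k ω) μ) :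
    IndepFun (fun ω (k : ℕ) => (U k ω, V k ω)) (fun ω (k : ℕ) => W k ω) μ := by
  set P : ℕ → Ω → A × B := fun k ω => (U k ω, V k ω)
  have hPm k : Measurable (P k) := (hUm k).prodMk (hVm k)
  have hUVWm k : Measurable fun ω => (U k ω, V k ω, W k ω) :=
    (hUm k).prodMk ((hVm k).prodMk (hWm k))
  have hUVW : IsStationary μ fun k ω => (U k ω, V k ω, W k ω) := hstat
  have hWP : IsStationary μ fun k ω => (W k ω, P k ω) :=
    hUVW.comp hUVWm (f := fun t => (t.2.2, (t.1, t.2.1))) Measurable.of_discrete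
  have hU : IsStationary μ U := hUVW.comp hUVWm measurable_fst
  have hW : IsStationary μ W := hUVW.comp hUVWm (measurable_snd.comp measurable_snd)
  have hnoise n : entropy μ (block W 0 n) ≤ condEntropy μ (block W 0 n) (block P 0 n) :=
    (hWP.subadditive_condEntropy_block hWm hPm).additive_le_of_sub_le
      ((condEntropy_le_entropy (measurable_block hPm 0 0)).trans (entropy_of_subsingleton _).le)
      (hW.entropy_block_add_of_iIndepFun hWiid hWm) (hU.subadditive_entropy_block hUm)
      (entropy_of_subsingleton _).le
      (fun ε hε => exists_entropy_block_div_lt (hU0.symm ▸ hε))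
      (entropy_block_sub_le_condEntropy_block hUm hVm hWm hVW) n
  refine indepFun_process_of_indepFun_block hPm hWm fun n => ?_
  refine ((condEntropy_eq_entropy_iff_indepFun (measurable_block hWm 0 n)
    (measurable_block hPm 0 n)).1 ?_).symm
  exact le_antisymm (condEntropy_le_entropy (measurable_block hPm 0 n)) (hnoise n)

theorem pair_process_indep_of_noise
    {Ω A B C : Type*} [MeasurableSpace Ω]
    [Fintype A] [Fintype B] [Fintype C]
    [MeasurableSpace A] [MeasurableSingletonClass A] [DiscreteMeasurableSpace A]
    [MeasurableSpace B] [MeasurableSingletonClass B] [DiscreteMeasurableSpace B]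
    [MeasurableSpace C] [MeasurableSingletonClass C] [DiscreteMeasurableSpace C]
    (μ : Measure Ω) [IsProbabilityMeasure μ]
    (U : ℕ → Ω → A) (V : ℕ → Ω → B) (W : ℕ → Ω → C)
    (hUm : ∀ k, Measurable (U k)) (hVm : ∀ k, Measurable (V k))
    (hWm : ∀ k, Measurable (W k))
    -- joint stationarity of the triple process
    (hstat : Measure.map (fun ω (k : ℕ) => (U (k + 1) ω, V (k + 1) ω, W (k + 1) ω)) μ =
      Measure.map (fun ω (k : ℕ) => (U k ω, V k ω, W k ω)) μ)
    -- U has zero entropy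
    (hU0 : procEntropy μ U = 0)
    -- V is ergodic (its law is an ergodic measure for the shift)
    (hVerg : Ergodic (fun (v : ℕ → B) (k : ℕ) => v (k + 1))
      (Measure.map (fun ω (k : ℕ) => V k ω) μ))
    -- W is i.i.d.
    (hWiid : iIndepFun W μ)
    (hWid : ∀ k, Measure.map (W k) μ = Measure.map (W 0) μ)
    -- V is independent of W
    (hVW : IndepFun (fun ω (k : ℕ) => V k ω) (fun ω (k : ℕ) => W k ω) μ) :
    IndepFun (fun ω (k : ℕ) => (U k ω, V k ω)) (fun ω (k : ℕ) => W k ω) μ :=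
  pair_process_indep_of_noise_general μ U V W hUm hVm hWm hstat hU0 hWiid hVW
end
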